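/- arXiv:1706.09649 — 4 statements merged into one kernel-verified Lean document; each statement's English description precedes it below -/
import Mathlib

section
/- Let p ≥ 4 and 1 ≤ k ≤ p − 3 be integers. Then the rank-generating function of the poset of regions of 𝒟_p^k with respect to the region of y_p factors according to the exponents 1, 3, …, 2p−3, p+k−1 of 𝒟_p^k; that is, in ℤ[t] one has ζ_p^k(t) = Σ_{x ∈ M_p^k} t^{sep_p^k(y_p, x)} = (∏_{i=1}^{p−1} (1 + t + ⋯ + t^{2i−1})) · (1 + t + ⋯ + t^{p+k−1}). -/
open Polynomial Finset

/-- The set `M_p^k` of representative integer points for the regions of `𝒟_p^k`: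
points with entries in `{±1, …, ±p}`, pairwise distinct absolute values, and
`x i ≠ -1` for the first `p - k` coordinates. -/
noncomputable def Mfin (p k : ℕ) : Finset (Fin p → ℤ) :=
  (Fintype.piFinset fun _ : Fin p => Finset.Icc (-(p : ℤ)) (p : ℤ)).filter
    fun x => (∀ i, x i ≠ 0) ∧ (∀ i j, i ≠ j → |x i| ≠ |x j|) ∧
      ∀ i : Fin p, (i : ℕ) < p - k → x i ≠ -1

/-- The number of hyperplanes of `𝒟_p^k` separating `u` and `v`, for `u, v` on
none of the hyperplanes: hyperplanes `ker (x_i - x_j)` and `ker (x_i + x_j)` for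
`i < j`, and `ker x_i` for the last `k` coordinates. -/
noncomputable def sep (p k : ℕ) (u v : Fin p → ℝ) : ℕ :=
  (Finset.univ.filter fun q : Fin p × Fin p =>
      q.1 < q.2 ∧ (u q.1 - u q.2) * (v q.1 - v q.2) < 0).card +
  (Finset.univ.filter fun q : Fin p × Fin p =>
      q.1 < q.2 ∧ (u q.1 + u q.2) * (v q.1 + v q.2) < 0).card +
  (Finset.univ.filter fun i : Fin p => p - k ≤ (i : ℕ) ∧ u i * v i < 0).card

/-- Coercion of an integer point to a real point. -/
def toR {p : ℕ} (x : Fin p → ℤ) : Fin p → ℝ := fun i => (x i : ℝ)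

/-- The base point `y_p = (p, p-1, …, 1)`. -/
noncomputable def ypt (p : ℕ) : Fin p → ℝ := fun i => (p : ℝ) - (i : ℝ)

/-- The rank-generating function of the poset of regions of `𝒟_p^k` with respect
to the region of `y_p`. -/
noncomputable def zeta (p k : ℕ) : Polynomial ℤ :=
  ∑ x ∈ Mfin p k, Polynomial.X ^ sep p k (ypt p) (toR x)

/-- `F e = 1 + t + ⋯ + t^e`. -/
noncomputable def Fpoly (e : ℕ) : Polynomial ℤ :=
  ∑ j ∈ Finset.range (e + 1), Polynomial.X ^ j

/-- The hyperplanes of the arrangement `𝒟_p^k` in `ℝ^p`. -/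
def hyps (p k : ℕ) : Set (Set (Fin p → ℝ)) :=
  {H | (∃ i j : Fin p, i < j ∧ H = {x | x i - x j = 0}) ∨
       (∃ i j : Fin p, i < j ∧ H = {x | x i + x j = 0}) ∨
       (∃ i : Fin p, p - k ≤ (i : ℕ) ∧ H = {x | x i = 0})}

/-- The complement of the union of the hyperplanes of `𝒟_p^k`. -/
def comp (p k : ℕ) : Set (Fin p → ℝ) := (⋃ H ∈ hyps p k, H)ᶜ

/-- Deletion of the `i`-th coordinate. -/
def deleteCoord {p : ℕ} (i : Fin p) (x : Fin p → ℤ) : Fin (p - 1) → ℤ :=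
  fun j =>
    if (j : ℕ) < (i : ℕ) then x ⟨j, by have := j.isLt; omega⟩
    else x ⟨(j : ℕ) + 1, by have := j.isLt; omega⟩


def statA {n : ℕ} (x : Fin n → ℤ) : ℕ :=
  ∑ i : Fin n, ∑ j : Fin n, if i < j ∧ x i < x j then 1 else 0
def statB {n : ℕ} (x : Fin n → ℤ) : ℕ :=
  ∑ i : Fin n, ∑ j : Fin n, if i < j ∧ x i + x j < 0 then 1 else 0
def statC (n k : ℕ) (x : Fin n → ℤ) : ℕ :=
  ∑ i : Fin n, if n - k ≤ (i : ℕ) ∧ x i < 0 then 1 else 0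
def stat (n k : ℕ) (x : Fin n → ℤ) : ℕ := statA x + statB x + statC n k x


lemma pos_mul_neg_iff {a b : ℝ} (ha : 0 < a) : a * b < 0 ↔ b < 0 := by
  rw [mul_neg_iff]
  constructor
  · rintro (⟨_, h⟩ | ⟨h, _⟩)
    · exact h
    · exact absurd ha (asymm h)
  · exact fun h => Or.inl ⟨ha, h⟩

lemma sep_eq_stat (n k : ℕ) (x : Fin n → ℤ) :
    ((Finset.univ.filter fun q : Fin n × Fin n =>
      q.1 < q.2 ∧ (ypt n q.1 - ypt n q.2) * ((x q.1 : ℝ) - (x q.2 : ℝ)) < 0).card +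
    (Finset.univ.filter fun q : Fin n × Fin n =>
      q.1 < q.2 ∧ (ypt n q.1 + ypt n q.2) * ((x q.1 : ℝ) + (x q.2 : ℝ)) < 0).card +
    (Finset.univ.filter fun i : Fin n => n - k ≤ (i : ℕ) ∧ ypt n i * (x i : ℝ) < 0).card)
    = stat n k x := by
  have hy : ∀ i : Fin n, (0:ℝ) < ypt n i := by
    intro i
    have := i.isLt
    simp only [ypt]
    have : ((i:ℕ):ℝ) < (n:ℝ) := by exact_mod_cast this
    linarith
  have hsub : ∀ i j : Fin n, i < j → (0:ℝ) < ypt n i - ypt n j := by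
    intro i j hij
    simp only [ypt]
    have : ((i:ℕ):ℝ) < ((j:ℕ):ℝ) := by exact_mod_cast (Fin.lt_def.mp hij)
    linarith
  rw [Finset.card_filter, Finset.card_filter, Finset.card_filter,
    Fintype.sum_prod_type, Fintype.sum_prod_type]
  unfold stat statA statB statC
  congr 1
  congr 1
  · apply Finset.sum_congr rfl; intro i _
    apply Finset.sum_congr rfl; intro j _
    congr 1
    simp only [eq_iff_iff]
    constructor
    · rintro ⟨h1, h2⟩
      refine ⟨h1, ?_⟩
      rw [pos_mul_neg_iff (hsub i j h1)] at h2
      have : (x i : ℝ) < x j := by linarith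
      exact_mod_cast this
    · rintro ⟨h1, h2⟩
      refine ⟨h1, ?_⟩
      rw [pos_mul_neg_iff (hsub i j h1)]
      have : (x i : ℝ) < x j := by exact_mod_cast h2
      linarith
  · apply Finset.sum_congr rfl; intro i _
    apply Finset.sum_congr rfl; intro j _
    congr 1
    simp only [eq_iff_iff]
    have hpos : (0:ℝ) < ypt n i + ypt n j := by have := hy i; have := hy j; linarith
    constructor
    · rintro ⟨h1, h2⟩
      rw [pos_mul_neg_iff hpos] at h2
      refine ⟨h1, ?_⟩
      have : ((x i + x j : ℤ) : ℝ) < 0 := by push_cast; linarith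
      exact_mod_cast this
    · rintro ⟨h1, h2⟩
      refine ⟨h1, ?_⟩
      rw [pos_mul_neg_iff hpos]
      have : ((x i + x j : ℤ) : ℝ) < 0 := by exact_mod_cast h2
      push_cast at this; linarith
  · apply Finset.sum_congr rfl; intro i _
    congr 1
    simp only [eq_iff_iff]
    constructor
    · rintro ⟨h1, h2⟩
      rw [pos_mul_neg_iff (hy i)] at h2
      exact ⟨h1, by exact_mod_cast h2⟩
    · rintro ⟨h1, h2⟩
      exact ⟨h1, by rw [pos_mul_neg_iff (hy i)]; exact_mod_cast h2⟩
lemma succAbove_val {n : ℕ} (q : Fin (n+1)) (i : Fin n) :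
    ((q.succAbove i : Fin (n+1)) : ℕ) = if (i:ℕ) < (q:ℕ) then (i:ℕ) else (i:ℕ)+1 := by
  rw [Fin.succAbove]
  by_cases h : (i:ℕ) < (q:ℕ)
  · rw [if_pos (show i.castSucc < q from Fin.lt_def.mpr h), if_pos h]; rfl
  · rw [if_neg (show ¬ i.castSucc < q from fun hc => h (Fin.lt_def.mp hc)), if_neg h]; rfl

lemma count_lt_add_count_gt {n : ℕ} (q : Fin (n+1)) :
    ((∑ i : Fin n, if q.succAbove i < q then 1 else 0) : ℕ)
      + (∑ i : Fin n, if q < q.succAbove i then 1 else 0) = n := by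
  rw [← Finset.sum_add_distrib]
  have : ∀ i : Fin n, ((if q.succAbove i < q then 1 else 0) : ℕ)
      + (if q < q.succAbove i then 1 else 0) = 1 := by
    intro i
    rcases lt_trichotomy (q.succAbove i) q with h | h | h
    · rw [if_pos h, if_neg (asymm h)]
    · exact absurd h (q.succAbove_ne i)
    · rw [if_neg (asymm h), if_pos h]
  rw [Finset.sum_congr rfl fun i _ => this i]
  simp

lemma count_lt {n : ℕ} (q : Fin (n+1)) :
    ((∑ i : Fin n, if q.succAbove i < q then 1 else 0) : ℕ) = (q:ℕ) := by
  have h : ∀ i : Fin n, (q.succAbove i < q) ↔ ((i:ℕ) < (q:ℕ)) := by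
    intro i
    rw [Fin.lt_def, succAbove_val]
    split_ifs with h1
    · tauto
    · omega
  simp only [h]
  rw [Fin.sum_univ_eq_sum_range (fun i => if i < (q:ℕ) then 1 else 0) n]
  have hq : (q:ℕ) ≤ n := by omega
  rw [Finset.range_eq_Ico, ← Finset.sum_Ico_consecutive _ (Nat.zero_le (q:ℕ)) hq]
  have h1 : ∑ i ∈ Finset.Ico 0 (q:ℕ), (if i < (q:ℕ) then 1 else 0) = ∑ i ∈ Finset.Ico 0 (q:ℕ), 1 := by
    apply Finset.sum_congr rfl; intro i hi
    rw [Finset.mem_Ico] at hi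
    rw [if_pos hi.2]
  have h2 : ∑ i ∈ Finset.Ico (q:ℕ) n, (if i < (q:ℕ) then 1 else 0) = 0 := by
    apply Finset.sum_eq_zero; intro i hi
    rw [Finset.mem_Ico] at hi
    rw [if_neg (by omega)]
  rw [h1, h2]
  simp

lemma count_gt {n : ℕ} (q : Fin (n+1)) :
    ((∑ i : Fin n, if q < q.succAbove i then 1 else 0) : ℕ) = n - (q:ℕ) := by
  have h1 := count_lt_add_count_gt q
  have h2 := count_lt q
  omega

lemma double_split {n : ℕ} (f : Fin (n+1) → Fin (n+1) → ℕ) (q : Fin (n+1)) :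
    (∑ i, ∑ j, f i j) = f q q + (∑ j : Fin n, f q (q.succAbove j))
      + (∑ i : Fin n, f (q.succAbove i) q)
      + ∑ i : Fin n, ∑ j : Fin n, f (q.succAbove i) (q.succAbove j) := by
  rw [Fin.sum_univ_succAbove (fun i => ∑ j, f i j) q,
    Fin.sum_univ_succAbove (f q) q]
  rw [Finset.sum_congr rfl fun i (_ : i ∈ Finset.univ) =>
    Fin.sum_univ_succAbove (f (q.succAbove i)) q]
  rw [Finset.sum_add_distrib]
  omega
def kdel (n k : ℕ) (q : Fin (n+1)) : ℕ := if (q:ℕ) < n+1-k then k else k-1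

section StatLemmas
variable {n k : ℕ} (q : Fin (n+1)) (x : Fin (n+1) → ℤ)

lemma statA_pos (hq : x q = (n:ℤ)+1) (hb : ∀ i : Fin n, |x (q.succAbove i)| ≤ (n:ℤ)) :
    statA x = (q:ℕ) + statA (fun i => x (q.succAbove i)) := by
  conv_lhs => unfold statA
  rw [double_split (fun i j => if i < j ∧ x i < x j then 1 else 0) q]
  have h1 : (if q < q ∧ x q < x q then 1 else 0) = 0 := by
    rw [if_neg]; rintro ⟨h, _⟩; exact lt_irrefl _ h
  have h2 : (∑ j : Fin n, if q < q.succAbove j ∧ x q < x (q.succAbove j) then 1 else 0) = 0 := by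
    apply Finset.sum_eq_zero; intro j _
    rw [if_neg]; rintro ⟨_, h⟩
    have := hb j; rw [hq] at h
    have := abs_le.mp this
    omega
  have h3 : (∑ i : Fin n, if q.succAbove i < q ∧ x (q.succAbove i) < x q then 1 else 0)
      = (q:ℕ) := by
    rw [← count_lt q]
    apply Finset.sum_congr rfl; intro i _
    congr 1
    simp only [eq_iff_iff, and_iff_left_iff_imp]
    intro _
    have := abs_le.mp (hb i)
    rw [hq]; omega
  have h4 : (∑ i : Fin n, ∑ j : Fin n,
      if q.succAbove i < q.succAbove j ∧ x (q.succAbove i) < x (q.succAbove j) then 1 else 0)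
      = statA (fun i => x (q.succAbove i)) := by
    unfold statA
    apply Finset.sum_congr rfl; intro i _
    apply Finset.sum_congr rfl; intro j _
    simp only [Fin.succAbove_lt_succAbove_iff]
  rw [h1, h2, h3, h4]
  omega

lemma statA_neg (hq : x q = -((n:ℤ)+1)) (hb : ∀ i : Fin n, |x (q.succAbove i)| ≤ (n:ℤ)) :
    statA x = (n - (q:ℕ)) + statA (fun i => x (q.succAbove i)) := by
  conv_lhs => unfold statA
  rw [double_split (fun i j => if i < j ∧ x i < x j then 1 else 0) q]
  have h1 : (if q < q ∧ x q < x q then 1 else 0) = 0 := by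
    rw [if_neg]; rintro ⟨h, _⟩; exact lt_irrefl _ h
  have h2 : (∑ j : Fin n, if q < q.succAbove j ∧ x q < x (q.succAbove j) then 1 else 0)
      = n - (q:ℕ) := by
    rw [← count_gt q]
    apply Finset.sum_congr rfl; intro j _
    congr 1
    simp only [eq_iff_iff, and_iff_left_iff_imp]
    intro _
    have := abs_le.mp (hb j)
    rw [hq]; omega
  have h3 : (∑ i : Fin n, if q.succAbove i < q ∧ x (q.succAbove i) < x q then 1 else 0) = 0 := by
    apply Finset.sum_eq_zero; intro i _
    rw [if_neg]; rintro ⟨_, h⟩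
    have := abs_le.mp (hb i); rw [hq] at h; omega
  have h4 : (∑ i : Fin n, ∑ j : Fin n,
      if q.succAbove i < q.succAbove j ∧ x (q.succAbove i) < x (q.succAbove j) then 1 else 0)
      = statA (fun i => x (q.succAbove i)) := by
    unfold statA
    apply Finset.sum_congr rfl; intro i _
    apply Finset.sum_congr rfl; intro j _
    simp only [Fin.succAbove_lt_succAbove_iff]
  rw [h1, h2, h3, h4]
  omega

lemma statB_pos (hq : x q = (n:ℤ)+1) (hb : ∀ i : Fin n, |x (q.succAbove i)| ≤ (n:ℤ)) :
    statB x = statB (fun i => x (q.succAbove i)) := by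
  conv_lhs => unfold statB
  rw [double_split (fun i j => if i < j ∧ x i + x j < 0 then 1 else 0) q]
  have h1 : (if q < q ∧ x q + x q < 0 then 1 else 0) = 0 := by
    rw [if_neg]; rintro ⟨h, _⟩; exact lt_irrefl _ h
  have h2 : (∑ j : Fin n, if q < q.succAbove j ∧ x q + x (q.succAbove j) < 0 then 1 else 0)
      = 0 := by
    apply Finset.sum_eq_zero; intro j _
    rw [if_neg]; rintro ⟨_, h⟩
    have := abs_le.mp (hb j); rw [hq] at h; omega
  have h3 : (∑ i : Fin n, if q.succAbove i < q ∧ x (q.succAbove i) + x q < 0 then 1 else 0)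
      = 0 := by
    apply Finset.sum_eq_zero; intro i _
    rw [if_neg]; rintro ⟨_, h⟩
    have := abs_le.mp (hb i); rw [hq] at h; omega
  have h4 : (∑ i : Fin n, ∑ j : Fin n,
      if q.succAbove i < q.succAbove j ∧ x (q.succAbove i) + x (q.succAbove j) < 0 then 1 else 0)
      = statB (fun i => x (q.succAbove i)) := by
    unfold statB
    apply Finset.sum_congr rfl; intro i _
    apply Finset.sum_congr rfl; intro j _
    simp only [Fin.succAbove_lt_succAbove_iff]
  rw [h1, h2, h3, h4]
  omega

lemma statB_neg (hq : x q = -((n:ℤ)+1)) (hb : ∀ i : Fin n, |x (q.succAbove i)| ≤ (n:ℤ)) :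
    statB x = n + statB (fun i => x (q.succAbove i)) := by
  conv_lhs => unfold statB
  rw [double_split (fun i j => if i < j ∧ x i + x j < 0 then 1 else 0) q]
  have h1 : (if q < q ∧ x q + x q < 0 then 1 else 0) = 0 := by
    rw [if_neg]; rintro ⟨h, _⟩; exact lt_irrefl _ h
  have h2 : (∑ j : Fin n, if q < q.succAbove j ∧ x q + x (q.succAbove j) < 0 then 1 else 0)
      = n - (q:ℕ) := by
    rw [← count_gt q]
    apply Finset.sum_congr rfl; intro j _
    congr 1
    simp only [eq_iff_iff, and_iff_left_iff_imp]
    intro _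
    have := abs_le.mp (hb j); rw [hq]; omega
  have h3 : (∑ i : Fin n, if q.succAbove i < q ∧ x (q.succAbove i) + x q < 0 then 1 else 0)
      = (q:ℕ) := by
    rw [← count_lt q]
    apply Finset.sum_congr rfl; intro i _
    congr 1
    simp only [eq_iff_iff, and_iff_left_iff_imp]
    intro _
    have := abs_le.mp (hb i); rw [hq]; omega
  have h4 : (∑ i : Fin n, ∑ j : Fin n,
      if q.succAbove i < q.succAbove j ∧ x (q.succAbove i) + x (q.succAbove j) < 0 then 1 else 0)
      = statB (fun i => x (q.succAbove i)) := by
    unfold statB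
    apply Finset.sum_congr rfl; intro i _
    apply Finset.sum_congr rfl; intro j _
    simp only [Fin.succAbove_lt_succAbove_iff]
  rw [h1, h2, h3, h4]
  have : (q:ℕ) ≤ n := by omega
  omega

lemma statC_split (hk : k ≤ n+1) :
    statC (n+1) k x = (if n+1-k ≤ (q:ℕ) ∧ x q < 0 then 1 else 0)
      + statC n (kdel n k q) (fun i => x (q.succAbove i)) := by
  unfold statC
  rw [Fin.sum_univ_succAbove (fun i => if n+1-k ≤ (i:ℕ) ∧ x i < 0 then 1 else 0) q]
  congr 1
  apply Finset.sum_congr rfl; intro i _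
  congr 1
  simp only [eq_iff_iff]
  have hi := i.isLt
  have hqv : (q:ℕ) ≤ n := by omega
  have hv := succAbove_val q i
  unfold kdel
  constructor
  · rintro ⟨h1, h2⟩
    refine ⟨?_, h2⟩
    split_ifs with hc
    · split_ifs at hv with hd <;> omega
    · split_ifs at hv with hd <;> omega
  · rintro ⟨h1, h2⟩
    refine ⟨?_, h2⟩
    split_ifs at h1 with hc
    · split_ifs at hv with hd <;> omega
    · split_ifs at hv with hd <;> omega

lemma stat_pos (hk : k ≤ n+1) (hq : x q = (n:ℤ)+1)
    (hb : ∀ i : Fin n, |x (q.succAbove i)| ≤ (n:ℤ)) :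
    stat (n+1) k x = (q:ℕ) + stat n (kdel n k q) (fun i => x (q.succAbove i)) := by
  unfold stat
  rw [statA_pos q x hq hb, statB_pos q x hq hb, statC_split q x hk]
  have : (if n+1-k ≤ (q:ℕ) ∧ x q < 0 then 1 else 0) = 0 := by
    rw [if_neg]; rintro ⟨_, h⟩; rw [hq] at h; omega
  rw [this]
  omega

lemma stat_neg (hk : k ≤ n+1) (hq : x q = -((n:ℤ)+1))
    (hb : ∀ i : Fin n, |x (q.succAbove i)| ≤ (n:ℤ)) :
    stat (n+1) k x = ((n - (q:ℕ)) + n + (if n+1-k ≤ (q:ℕ) then 1 else 0))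
      + stat n (kdel n k q) (fun i => x (q.succAbove i)) := by
  unfold stat
  rw [statA_neg q x hq hb, statB_neg q x hq hb, statC_split q x hk]
  have : (if n+1-k ≤ (q:ℕ) ∧ x q < 0 then 1 else 0) = (if n+1-k ≤ (q:ℕ) then 1 else 0) := by
    have : x q < 0 := by rw [hq]; omega
    simp [this]
  rw [this]
  omega

end StatLemmas
lemma sep_eq_stat' (n k : ℕ) (x : Fin n → ℤ) : sep n k (ypt n) (toR x) = stat n k x := by
  unfold sep ypt toR
  exact sep_eq_stat n k x

lemma mem_Mfin_iff {n k : ℕ} {x : Fin n → ℤ} : x ∈ Mfin n k ↔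
    (∀ i, -(n:ℤ) ≤ x i ∧ x i ≤ n) ∧ (∀ i, x i ≠ 0) ∧ (∀ i j, i ≠ j → |x i| ≠ |x j|) ∧
    ∀ i : Fin n, (i : ℕ) < n - k → x i ≠ -1 := by
  unfold Mfin
  rw [Finset.mem_filter, Fintype.mem_piFinset]
  simp only [Finset.mem_Icc]

lemma abs_top {n : ℕ} {v : ℤ} (hv : v = (n:ℤ)+1 ∨ v = -((n:ℤ)+1)) : |v| = (n:ℤ)+1 := by
  rcases hv with h | h
  · rw [h, abs_of_nonneg (by positivity)]
  · rw [h, abs_neg, abs_of_nonneg (by positivity)]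

lemma exists_top {n k : ℕ} {x : Fin (n+1) → ℤ} (hx : x ∈ Mfin (n+1) k) :
    ∃ q, x q = (n:ℤ)+1 ∨ x q = -((n:ℤ)+1) := by
  rw [mem_Mfin_iff] at hx
  obtain ⟨hbd, hnz, hdist, -⟩ := hx
  have hinj : Function.Injective fun i => |x i| := by
    intro i j h
    by_contra hne
    exact hdist i j hne h
  have hsub : Finset.image (fun i => |x i|) Finset.univ ⊆ Finset.Icc 1 ((n:ℤ)+1) := by
    intro a ha
    rw [Finset.mem_image] at ha
    obtain ⟨i, -, rfl⟩ := ha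
    rw [Finset.mem_Icc]
    have h1 := hbd i
    have h2 := hnz i
    constructor
    · exact Int.one_le_abs (by omega)
    · rw [abs_le]; push_cast at h1 ⊢; omega
  have hcard : (Finset.Icc 1 ((n:ℤ)+1)).card = n + 1 := by
    rw [Int.card_Icc]
    simp
  have him : Finset.image (fun i => |x i|) Finset.univ = Finset.Icc 1 ((n:ℤ)+1) := by
    apply Finset.eq_of_subset_of_card_le hsub
    rw [Finset.card_image_of_injective _ hinj, hcard]
    simp
  have : ((n:ℤ)+1) ∈ Finset.image (fun i => |x i|) Finset.univ := by
    rw [him, Finset.mem_Icc]; omega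
  rw [Finset.mem_image] at this
  obtain ⟨q, -, hq⟩ := this
  exact ⟨q, (abs_eq (by positivity)).mp hq⟩

lemma bounds_del {n k : ℕ} {x : Fin (n+1) → ℤ} (hx : x ∈ Mfin (n+1) k) (q : Fin (n+1))
    (hq : x q = (n:ℤ)+1 ∨ x q = -((n:ℤ)+1)) :
    ∀ i : Fin n, |x (q.succAbove i)| ≤ (n:ℤ) := by
  rw [mem_Mfin_iff] at hx
  obtain ⟨hbd, hnz, hdist, -⟩ := hx
  intro i
  have h1 := hbd (q.succAbove i)
  have h2 : |x (q.succAbove i)| ≠ |x q| := hdist _ _ (q.succAbove_ne i)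
  have h3 : |x q| = (n:ℤ)+1 := abs_top hq
  rw [h3] at h2
  have habs : |x (q.succAbove i)| ≤ (n:ℤ)+1 := by
    rw [abs_le]; push_cast at h1; omega
  have h5 := abs_lt.mp (lt_of_le_of_ne habs h2)
  rw [abs_le]
  omega

lemma top_idx_unique {n k : ℕ} {x : Fin (n+1) → ℤ} (hx : x ∈ Mfin (n+1) k) {q q' : Fin (n+1)}
    (hq : x q = (n:ℤ)+1 ∨ x q = -((n:ℤ)+1)) (hq' : x q' = (n:ℤ)+1 ∨ x q' = -((n:ℤ)+1)) :
    q = q' := by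
  by_contra h
  have := (mem_Mfin_iff.mp hx).2.2.1 q q' h
  have h3 : |x q| = (n:ℤ)+1 := abs_top hq
  have h4 : |x q'| = (n:ℤ)+1 := abs_top hq'
  rw [h3, h4] at this
  exact this rfl

lemma mem_del {n k : ℕ} (hk : k ≤ n+1) {x : Fin (n+1) → ℤ} (hx : x ∈ Mfin (n+1) k)
    (q : Fin (n+1)) (hq : x q = (n:ℤ)+1 ∨ x q = -((n:ℤ)+1)) :
    (fun i => x (q.succAbove i)) ∈ Mfin n (kdel n k q) := by
  have hb := bounds_del hx q hq
  rw [mem_Mfin_iff] at hx ⊢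
  obtain ⟨hbd, hnz, hdist, hcon⟩ := hx
  refine ⟨fun i => abs_le.mp (hb i), fun i => hnz _, fun i j hij => hdist _ _ ?_, fun i hi => ?_⟩
  · exact fun h => hij (Fin.succAbove_right_injective h)
  · apply hcon
    have hv := succAbove_val q i
    have hqn : (q:ℕ) ≤ n := by omega
    have hin := i.isLt
    unfold kdel at hi
    split_ifs at hi with hc <;> split_ifs at hv with hd <;> omega

def insZ {n : ℕ} (q : Fin (n+1)) (v : ℤ) (y : Fin n → ℤ) : Fin (n+1) → ℤ :=
  Fin.insertNth (α := fun _ => ℤ) q v y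

lemma insZ_same {n : ℕ} (q : Fin (n+1)) (v : ℤ) (y : Fin n → ℤ) : insZ q v y q = v := by
  unfold insZ; simp

lemma insZ_succAbove {n : ℕ} (q : Fin (n+1)) (v : ℤ) (y : Fin n → ℤ) (i : Fin n) :
    insZ q v y (q.succAbove i) = y i := by
  unfold insZ; simp

lemma insZ_self {n : ℕ} (q : Fin (n+1)) (x : Fin (n+1) → ℤ) :
    insZ q (x q) (fun i => x (q.succAbove i)) = x := by
  unfold insZ
  exact Fin.insertNth_self_removeNth (α := fun _ => ℤ) q x

lemma mem_ins {n k : ℕ} (hn : 1 ≤ n) (hk : k ≤ n+1) (q : Fin (n+1)) (v : ℤ)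
    (hv : v = (n:ℤ)+1 ∨ v = -((n:ℤ)+1)) {y : Fin n → ℤ} (hy : y ∈ Mfin n (kdel n k q)) :
    insZ q v y ∈ Mfin (n+1) k := by
  rw [mem_Mfin_iff] at hy ⊢
  obtain ⟨hbd, hnz, hdist, hcon⟩ := hy
  have happ : ∀ i : Fin n, insZ q v y (q.succAbove i) = y i := insZ_succAbove q v y
  have happq : insZ q v y q = v := insZ_same q v y
  have hcase : ∀ i : Fin (n+1), i = q ∨ ∃ j, q.succAbove j = i := by
    intro i
    rcases eq_or_ne i q with h | h
    · exact Or.inl h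
    · exact Or.inr (Fin.exists_succAbove_eq h)
  refine ⟨?_, ?_, ?_, ?_⟩
  · intro i
    rcases hcase i with rfl | ⟨j, rfl⟩
    · rw [happq]; push_cast; omega
    · rw [happ]; have := hbd j; push_cast; omega
  · intro i
    rcases hcase i with rfl | ⟨j, rfl⟩
    · rw [happq]; omega
    · rw [happ]; exact hnz j
  · intro i j hij
    rcases hcase i with rfl | ⟨i', rfl⟩ <;> rcases hcase j with rfl | ⟨j', rfl⟩
    · exact absurd rfl hij
    · rw [happq, happ]
      have h1 := hbd j'
      have h2 : |v| = (n:ℤ)+1 := abs_top hv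
      have h3 := abs_le.mpr (hbd j')
      omega
    · rw [happq, happ]
      have h2 : |v| = (n:ℤ)+1 := abs_top hv
      have h3 := abs_le.mpr (hbd i')
      omega
    · rw [happ, happ]
      exact hdist i' j' fun h => hij (by rw [h])
  · intro i hi
    rcases hcase i with rfl | ⟨j, rfl⟩
    · rw [happq]
      rcases hv with h | h <;> rw [h] <;> intro hfalse <;> omega
    · rw [happ]
      apply hcon
      have hv2 := succAbove_val q j
      have hqn : (q:ℕ) ≤ n := by omega
      have hjn := j.isLt
      unfold kdel
      split_ifs with hc <;> split_ifs at hv2 with hd <;> omega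

noncomputable def qOf {n : ℕ} (x : Fin (n+1) → ℤ) : Fin (n+1) :=
  if h : ∃ q, x q = (n:ℤ)+1 ∨ x q = -((n:ℤ)+1) then h.choose else ⟨0, Nat.succ_pos n⟩

lemma qOf_spec {n : ℕ} {x : Fin (n+1) → ℤ} (h : ∃ q, x q = (n:ℤ)+1 ∨ x q = -((n:ℤ)+1)) :
    x (qOf x) = (n:ℤ)+1 ∨ x (qOf x) = -((n:ℤ)+1) := by
  rw [qOf, dif_pos h]
  exact h.choose_spec
lemma zeta_stat (m j : ℕ) : zeta m j = ∑ x ∈ Mfin m j, (X : Polynomial ℤ) ^ stat m j x :=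
  Finset.sum_congr rfl fun x _ => by rw [sep_eq_stat']

lemma zeta_succ (n k : ℕ) (hn : 1 ≤ n) (hk : k ≤ n+1) :
    zeta (n+1) k = ∑ q : Fin (n+1),
      ((X : Polynomial ℤ) ^ (q:ℕ)
        + X ^ ((n - (q:ℕ)) + n + (if n+1-k ≤ (q:ℕ) then 1 else 0))) * zeta n (kdel n k q) := by
  classical
  have hne : ((n:ℤ)+1) ≠ -((n:ℤ)+1) := by omega
  calc zeta (n+1) k
      = ∑ x ∈ Mfin (n+1) k, (X : Polynomial ℤ) ^ stat (n+1) k x := zeta_stat _ _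
    _ = ∑ a ∈ (Finset.univ : Finset (Fin (n+1))).sigma
          (fun q => ({((n:ℤ)+1), -((n:ℤ)+1)} : Finset ℤ) ×ˢ Mfin n (kdel n k q)),
        (X : Polynomial ℤ) ^ ((if a.2.1 = (n:ℤ)+1 then (a.1:ℕ)
          else (n - (a.1:ℕ)) + n + (if n+1-k ≤ (a.1:ℕ) then 1 else 0))
          + stat n (kdel n k a.1) a.2.2) := by
        refine Finset.sum_bij'
          (fun x hx => ⟨qOf x, (x (qOf x), fun i => x ((qOf x).succAbove i))⟩)
          (fun a ha => insZ a.1 a.2.1 a.2.2) ?hi ?hj ?left ?right ?h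
        case hi =>
          intro x hx
          have h := qOf_spec (exists_top hx)
          rw [Finset.mem_sigma]
          refine ⟨Finset.mem_univ _, ?_⟩
          rw [Finset.mem_product]
          constructor
          · simp only [Finset.mem_insert, Finset.mem_singleton]
            exact h
          · exact mem_del hk hx _ h
        case hj =>
          intro a ha
          rw [Finset.mem_sigma, Finset.mem_product] at ha
          obtain ⟨-, hv, hy⟩ := ha
          simp only [Finset.mem_insert, Finset.mem_singleton] at hv
          exact mem_ins hn hk a.1 a.2.1 hv hy
        case left =>
          intro x hx
          exact insZ_self _ x
        case right =>
          intro a ha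
          rw [Finset.mem_sigma, Finset.mem_product] at ha
          obtain ⟨-, hv, hy⟩ := ha
          simp only [Finset.mem_insert, Finset.mem_singleton] at hv
          obtain ⟨q, v, y⟩ := a
          have hx : insZ q v y ∈ Mfin (n+1) k := mem_ins hn hk q v hv hy
          have hq1 : insZ q v y q = v := insZ_same q v y
          have hspec := qOf_spec (x := insZ q v y) ⟨q, by rw [hq1]; exact hv⟩
          have hqq : qOf (insZ q v y) = q :=
            top_idx_unique hx hspec (by rw [hq1]; exact hv)
          simp only at hqq ⊢
          rw [hqq, hq1]
          exact congrArg (fun z => (⟨q, (v, z)⟩ : (_ : Fin (n+1)) × ℤ × (Fin n → ℤ)))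
            (funext fun i => insZ_succAbove q v y i)
        case h =>
          intro x hx
          have h := qOf_spec (exists_top hx)
          have hb := bounds_del hx _ h
          rcases h with h | h
          · simp only [h, eq_self_iff_true, if_true]
            rw [stat_pos (qOf x) x hk h hb]
          · simp only [h, if_neg (show ¬ (-((n:ℤ)+1) = (n:ℤ)+1) by omega)]
            rw [stat_neg (qOf x) x hk h hb]
    _ = ∑ q : Fin (n+1), ∑ vy ∈ ({((n:ℤ)+1), -((n:ℤ)+1)} : Finset ℤ) ×ˢ Mfin n (kdel n k q),
        (X : Polynomial ℤ) ^ ((if vy.1 = (n:ℤ)+1 then (q:ℕ)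
          else (n - (q:ℕ)) + n + (if n+1-k ≤ (q:ℕ) then 1 else 0))
          + stat n (kdel n k q) vy.2) := Finset.sum_sigma _ _ _
    _ = _ := by
        apply Finset.sum_congr rfl
        intro q _
        rw [Finset.sum_product, Finset.sum_pair hne]
        simp only [eq_self_iff_true, if_true,
          if_neg (show ¬ (-((n:ℤ)+1) = (n:ℤ)+1) by omega)]
        rw [zeta_stat n (kdel n k q), add_mul, Finset.mul_sum, Finset.mul_sum]
        congr 1 <;>
          · apply Finset.sum_congr rfl
            intro y _
            rw [pow_add]
lemma Fpoly_mul_X_sub_one (e : ℕ) : Fpoly e * ((X : Polynomial ℤ) - 1) = X ^ (e+1) - 1 :=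
  geom_sum_mul X (e+1)

lemma Ico_pow_mul (a b : ℕ) (h : a ≤ b) :
    (∑ j ∈ Finset.Ico a b, (X : Polynomial ℤ) ^ j) * (X - 1) = X ^ b - X ^ a := by
  rw [Finset.sum_Ico_eq_sub _ h, sub_mul, geom_sum_mul, geom_sum_mul]
  ring

lemma reflect_sum (n k : ℕ) (hk : k ≤ n+1) :
    ∑ q ∈ Finset.range (n+1-k), (X : Polynomial ℤ) ^ ((n-q)+n)
      = ∑ j ∈ Finset.Ico (n+k) (2*n+1), (X : Polynomial ℤ) ^ j := by
  refine Finset.sum_nbij' (fun q => 2*n - q) (fun j => 2*n - j) ?_ ?_ ?_ ?_ ?_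
  · intro q hq
    rw [Finset.mem_range] at hq
    rw [Finset.mem_Ico]
    omega
  · intro j hj
    rw [Finset.mem_Ico] at hj
    rw [Finset.mem_range]
    omega
  · intro q hq
    rw [Finset.mem_range] at hq
    omega
  · intro j hj
    rw [Finset.mem_Ico] at hj
    omega
  · intro q hq
    rw [Finset.mem_range] at hq
    congr 1
    omega

lemma reflect_sum2 (n k : ℕ) (hk : k ≤ n+1) :
    ∑ q ∈ Finset.Ico (n+1-k) (n+1), (X : Polynomial ℤ) ^ ((n-q)+n+1)
      = ∑ j ∈ Finset.Ico (n+1) (n+k+1), (X : Polynomial ℤ) ^ j := by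
  refine Finset.sum_nbij' (fun q => 2*n+1 - q) (fun j => 2*n+1 - j) ?_ ?_ ?_ ?_ ?_
  · intro q hq
    rw [Finset.mem_Ico] at hq
    rw [Finset.mem_Ico]
    omega
  · intro j hj
    rw [Finset.mem_Ico] at hj
    rw [Finset.mem_Ico]
    omega
  · intro q hq
    rw [Finset.mem_Ico] at hq
    omega
  · intro j hj
    rw [Finset.mem_Ico] at hj
    omega
  · intro q hq
    rw [Finset.mem_Ico] at hq
    congr 1
    omega

lemma key (n k : ℕ) (hn : 1 ≤ n) (hk : k ≤ n+1) :
    ((∑ q ∈ Finset.range (n+1-k), (X : Polynomial ℤ) ^ q)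
        + ∑ j ∈ Finset.Ico (n+k) (2*n+1), (X : Polynomial ℤ) ^ j) * Fpoly (n+k-1)
      + ((∑ q ∈ Finset.Ico (n+1-k) (n+1), (X : Polynomial ℤ) ^ q)
        + ∑ j ∈ Finset.Ico (n+1) (n+k+1), (X : Polynomial ℤ) ^ j) * Fpoly (n+(k-1)-1)
      = Fpoly (2*n-1) * Fpoly (n+k) := by
  have hD : ((X : Polynomial ℤ) - 1) ≠ 0 := by
    have := Polynomial.X_sub_C_ne_zero (1 : ℤ)
    simpa using this
  apply mul_right_cancel₀ (pow_ne_zero 2 hD)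
  have hexp : ∀ A B C D' E F' : Polynomial ℤ,
      ((A + B) * C + (D' + E) * F') * ((X - 1)^2)
      = (A * (X-1) + B * (X-1)) * (C * (X-1)) + (D' * (X-1) + E * (X-1)) * (F' * (X-1)) := by
    intros; ring
  have hexp2 : ∀ A B : Polynomial ℤ, (A * B) * ((X-1)^2) = (A * (X-1)) * (B * (X-1)) := by
    intros; ring
  rw [hexp, hexp2]
  rw [geom_sum_mul, Ico_pow_mul _ _ (by omega), Ico_pow_mul _ _ (by omega),
    Ico_pow_mul _ _ (by omega), Fpoly_mul_X_sub_one, Fpoly_mul_X_sub_one,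
    Fpoly_mul_X_sub_one, Fpoly_mul_X_sub_one]
  rcases Nat.eq_zero_or_pos k with rfl | hk1
  · simp only [Nat.add_zero, Nat.sub_zero, Nat.zero_sub]
    rw [show 2*n-1+1 = 2*n from by omega, show n-1+1 = n from by omega]
    ring
  · obtain ⟨c, rfl⟩ : ∃ c, k = c + 1 := ⟨k - 1, by omega⟩
    obtain ⟨m, rfl⟩ : ∃ m, n = m + c := ⟨n - c, by omega⟩
    rw [show m+c+1-(c+1) = m from by omega, show m+c+(c+1)-1+1 = m+c+(c+1) from by omega,
      show m+c+(c+1-1)-1+1 = m+c+c from by omega, show 2*(m+c)-1+1 = 2*(m+c) from by omega]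
    ring
lemma Mfin_one_zero : Mfin 1 0 = {fun _ => (1:ℤ)} := by
  ext x
  rw [mem_Mfin_iff, Finset.mem_singleton]
  constructor
  · rintro ⟨hbd, hnz, -, hcon⟩
    funext i
    have h0 := hbd i
    have h1 := hnz i
    have h2 := hcon i (by omega)
    push_cast at h0
    omega
  · rintro rfl
    refine ⟨fun i => by norm_num, fun i => by norm_num, fun i j hij => ?_, fun i hi => by norm_num⟩
    exact absurd (Subsingleton.elim i j) hij

lemma Mfin_one_one : Mfin 1 1 = {fun _ => (1:ℤ), fun _ => (-1:ℤ)} := by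
  ext x
  rw [mem_Mfin_iff, Finset.mem_insert, Finset.mem_singleton]
  constructor
  · rintro ⟨hbd, hnz, -, -⟩
    have h0 := hbd 0
    have h1 := hnz 0
    push_cast at h0
    rcases (by omega : x 0 = 1 ∨ x 0 = -1) with h | h
    · left; funext i; rw [Subsingleton.elim i 0, h]
    · right; funext i; rw [Subsingleton.elim i 0, h]
  · rintro (rfl | rfl)
    · refine ⟨fun i => by norm_num, fun i => by norm_num, fun i j hij => ?_, fun i hi => by omega⟩
      exact absurd (Subsingleton.elim i j) hij
    · refine ⟨fun i => by norm_num, fun i => by norm_num, fun i j hij => ?_, fun i hi => by omega⟩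
      exact absurd (Subsingleton.elim i j) hij

lemma stat_one (k : ℕ) (x : Fin 1 → ℤ) :
    stat 1 k x = if 1 - k ≤ 0 ∧ x 0 < 0 then 1 else 0 := by
  unfold stat statA statB statC
  rw [Fin.sum_univ_one, Fin.sum_univ_one, Fin.sum_univ_one, Fin.sum_univ_one]
  have : ¬ ((0 : Fin 1) < 0) := lt_irrefl _
  rw [if_neg (by tauto), if_neg (by tauto), Fin.sum_univ_one]
  norm_num

lemma base_one (k : ℕ) (hk : k ≤ 1) : zeta 1 k = Fpoly k := by
  rw [zeta_stat]
  interval_cases k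
  · rw [Mfin_one_zero, Finset.sum_singleton, stat_one]
    rw [if_neg (by omega)]
    simp [Fpoly]
  · rw [Mfin_one_one]
    have hne : (fun _ : Fin 1 => (1:ℤ)) ≠ (fun _ : Fin 1 => (-1:ℤ)) := by
      intro h
      have := congrFun h 0
      norm_num at this
    rw [Finset.sum_pair hne, stat_one, stat_one]
    rw [if_neg (by norm_num), if_pos (by norm_num)]
    simp [Fpoly, Finset.sum_range_succ]

lemma main_formula : ∀ n : ℕ, 1 ≤ n → ∀ k : ℕ, k ≤ n →
    zeta n k = (∏ i ∈ Finset.Icc 1 (n-1), Fpoly (2*i-1)) * Fpoly (n+k-1) := by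
  intro n
  induction n with
  | zero => omega
  | succ n ih =>
    intro _ k hk
    rcases Nat.eq_zero_or_pos n with rfl | hn
    · -- n + 1 = 1
      rw [base_one k hk]
      rw [show (1:ℕ) - 1 = 0 from rfl, Finset.Icc_eq_empty (by omega), Finset.prod_empty,
        one_mul, show 1 + k - 1 = k from by omega]
    · rw [zeta_succ n k hn (by omega)]
      have hstep : ∀ q : Fin (n+1),
          ((X : Polynomial ℤ) ^ (q:ℕ)
            + X ^ ((n - (q:ℕ)) + n + (if n+1-k ≤ (q:ℕ) then 1 else 0))) * zeta n (kdel n k q)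
          = (fun q : ℕ => ((X : Polynomial ℤ) ^ q
            + X ^ ((n - q) + n + (if n+1-k ≤ q then 1 else 0)))
              * zeta n (if q < n+1-k then k else k-1)) (q:ℕ) := by
        intro q
        unfold kdel
        rfl
      rw [Finset.sum_congr rfl fun q _ => hstep q]
      rw [Fin.sum_univ_eq_sum_range (fun q : ℕ => ((X : Polynomial ℤ) ^ q
        + X ^ ((n - q) + n + (if n+1-k ≤ q then 1 else 0)))
          * zeta n (if q < n+1-k then k else k-1)) (n+1)]
      rw [Finset.range_eq_Ico,
        ← Finset.sum_Ico_consecutive _ (Nat.zero_le (n+1-k)) (show n+1-k ≤ n+1 by omega)]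
      have hpart1 : ∑ q ∈ Finset.Ico 0 (n+1-k), ((X : Polynomial ℤ) ^ q
            + X ^ ((n - q) + n + (if n+1-k ≤ q then 1 else 0)))
              * zeta n (if q < n+1-k then k else k-1)
          = ∑ q ∈ Finset.Ico 0 (n+1-k), ((X : Polynomial ℤ) ^ q + X ^ ((n - q) + n))
              * ((∏ i ∈ Finset.Icc 1 (n-1), Fpoly (2*i-1)) * Fpoly (n+k-1)) := by
        apply Finset.sum_congr rfl
        intro q hq
        rw [Finset.mem_Ico] at hq
        rw [if_neg (by omega), if_pos (by omega), add_zero, ih hn k (by omega)]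
      have hpart2 : ∑ q ∈ Finset.Ico (n+1-k) (n+1), ((X : Polynomial ℤ) ^ q
            + X ^ ((n - q) + n + (if n+1-k ≤ q then 1 else 0)))
              * zeta n (if q < n+1-k then k else k-1)
          = ∑ q ∈ Finset.Ico (n+1-k) (n+1), ((X : Polynomial ℤ) ^ q + X ^ ((n - q) + n + 1))
              * ((∏ i ∈ Finset.Icc 1 (n-1), Fpoly (2*i-1)) * Fpoly (n+(k-1)-1)) := by
        apply Finset.sum_congr rfl
        intro q hq
        rw [Finset.mem_Ico] at hq
        rw [if_pos (by omega), if_neg (by omega), ih hn (k-1) (by omega)]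
      rw [hpart1, hpart2, ← Finset.sum_mul, ← Finset.sum_mul]
      rw [Finset.sum_add_distrib, Finset.sum_add_distrib]
      rw [← Finset.range_eq_Ico]
      rw [reflect_sum n k (by omega), reflect_sum2 n k (by omega)]
      -- product manipulation
      obtain ⟨m, rfl⟩ : ∃ m, n = m + 1 := ⟨n - 1, by omega⟩
      rw [show (m+1+1) - 1 = m + 1 from rfl, show (m+1) - 1 = m from rfl]
      rw [Finset.prod_Icc_succ_top (by omega) (fun i => Fpoly (2*i-1))]
      rw [show m+1+1+k-1 = (m+1)+k from by omega]
      calc ((∑ q ∈ Finset.range (m+1+1-k), (X : Polynomial ℤ) ^ q)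
              + ∑ j ∈ Finset.Ico (m+1+k) (2*(m+1)+1), (X : Polynomial ℤ) ^ j)
              * ((∏ i ∈ Finset.Icc 1 m, Fpoly (2*i-1)) * Fpoly (m+1+k-1))
            + ((∑ q ∈ Finset.Ico (m+1+1-k) (m+1+1), (X : Polynomial ℤ) ^ q)
              + ∑ j ∈ Finset.Ico (m+1+1) (m+1+k+1), (X : Polynomial ℤ) ^ j)
              * ((∏ i ∈ Finset.Icc 1 m, Fpoly (2*i-1)) * Fpoly (m+1+(k-1)-1))
          = (∏ i ∈ Finset.Icc 1 m, Fpoly (2*i-1)) *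
              (((∑ q ∈ Finset.range (m+1+1-k), (X : Polynomial ℤ) ^ q)
              + ∑ j ∈ Finset.Ico (m+1+k) (2*(m+1)+1), (X : Polynomial ℤ) ^ j) * Fpoly (m+1+k-1)
            + ((∑ q ∈ Finset.Ico (m+1+1-k) (m+1+1), (X : Polynomial ℤ) ^ q)
              + ∑ j ∈ Finset.Ico (m+1+1) (m+1+k+1), (X : Polynomial ℤ) ^ j)
                * Fpoly (m+1+(k-1)-1)) := by ring
        _ = (∏ i ∈ Finset.Icc 1 m, Fpoly (2*i-1)) * (Fpoly (2*(m+1)-1) * Fpoly ((m+1)+k)) := by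
            rw [key (m+1) k (by omega) (by omega)]
        _ = (∏ i ∈ Finset.Icc 1 m, Fpoly (2*i-1)) * Fpoly (2*(m+1)-1) * Fpoly ((m+1)+k) := by
            ring
/-- For `p ≥ 4` and `1 ≤ k ≤ p - 3`, the rank-generating function of the
poset of regions of `𝒟_p^k` with base region the region of `y_p` factors according to the
exponents `1, 3, …, 2p-3, p+k-1`. -/
theorem zeta_factors_of_Dpk (p k : ℕ) (hp : 4 ≤ p) (hk1 : 1 ≤ k) (hk2 : k ≤ p - 3) :
    zeta p k = (∏ i ∈ Finset.Icc 1 (p - 1), Fpoly (2 * i - 1)) * Fpoly (p + k - 1) :=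
  main_formula p (by omega) k (by omega)
end

section
/- Let p ≥ 2, 0 ≤ k ≤ p and 1 ≤ i ≤ p be integers, and let z ∈ ℝ^p be the point z = (p−1, p−2, …, p−i+1, p, p−i, …, 1), i.e., z_j = p − j for j < i, z_i = p, and z_j = p − j + 1 for j > i. Then z lies on none of the hyperplanes of 𝒟_p^k and sep_p^k(y_p, z) = i − 1. -/
open Polynomial Finset

/-- the point `z` obtained from `y_p` by moving the value `p` into the
(0-indexed) `i`-th slot lies on none of the hyperplanes of `𝒟_p^k`, and exactly `i`
(1-indexed: `i - 1`) hyperplanes separate `y_p` and `z`. -/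
theorem sep_z_plus (p k : ℕ) (hp : 2 ≤ p) (hk : k ≤ p) (i : Fin p)
    (z : Fin p → ℝ)
    (hzlt : ∀ j : Fin p, (j : ℕ) < (i : ℕ) → z j = (p : ℝ) - (j : ℕ) - 1)
    (hzi : z i = (p : ℝ))
    (hzgt : ∀ j : Fin p, (i : ℕ) < (j : ℕ) → z j = (p : ℝ) - (j : ℕ)) :
    (∀ H ∈ hyps p k, z ∉ H) ∧ sep p k (ypt p) z = (i : ℕ) := by
  have hcast : ∀ j : Fin p, ((j:ℕ):ℝ) < (p:ℝ) := fun j => by exact_mod_cast j.isLt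
  have hzpos : ∀ j : Fin p, 0 < z j := by
    intro j
    rcases lt_trichotomy (j : ℕ) (i : ℕ) with h | h | h
    · rw [hzlt j h]
      have h1 : (j:ℕ) + 1 < p := by have := i.isLt; omega
      have h2 : ((j:ℕ):ℝ) + 1 < (p:ℝ) := by exact_mod_cast h1
      linarith
    · rw [Fin.ext h, hzi]
      have h2 : (2:ℝ) ≤ (p:ℝ) := by exact_mod_cast hp
      linarith
    · rw [hzgt j h]; linarith [hcast j]
  have hdiff : ∀ a b : Fin p, a < b → (if b = i then z a < z b else z b < z a) := by
    intro a b hab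
    have hab' : (a:ℕ) < (b:ℕ) := hab
    by_cases hbi : b = i
    · rw [if_pos hbi]
      subst hbi
      rw [hzlt a hab', hzi]
      have : (0:ℝ) ≤ ((a:ℕ):ℝ) := Nat.cast_nonneg _
      linarith
    · rw [if_neg hbi]
      have hbi' : (b:ℕ) ≠ (i:ℕ) := fun h => hbi (Fin.ext h)
      rcases lt_trichotomy (b:ℕ) (i:ℕ) with hb | hb | hb
      · rw [hzlt a (by omega), hzlt b hb]
        have : ((a:ℕ):ℝ) < ((b:ℕ):ℝ) := by exact_mod_cast hab'
        linarith
      · exact absurd hb hbi'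
      · rw [hzgt b hb]
        rcases lt_trichotomy (a:ℕ) (i:ℕ) with ha | ha | ha
        · rw [hzlt a ha]
          have : ((a:ℕ):ℝ) + 1 < ((b:ℕ):ℝ) := by exact_mod_cast (by omega : (a:ℕ)+1 < (b:ℕ))
          linarith
        · rw [Fin.ext ha, hzi]
          have : (0:ℝ) < ((b:ℕ):ℝ) := by exact_mod_cast (by omega : 0 < (b:ℕ))
          linarith
        · rw [hzgt a ha]
          have : ((a:ℕ):ℝ) < ((b:ℕ):ℝ) := by exact_mod_cast hab'
          linarith
  have hne : ∀ a b : Fin p, a < b → z a ≠ z b := by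
    intro a b hab h
    have := hdiff a b hab
    split at this <;> linarith
  have hypos : ∀ j : Fin p, 0 < ypt p j := by
    intro j; simp only [ypt]; linarith [hcast j]
  have hy : ∀ a b : Fin p, a < b → 0 < ypt p a - ypt p b := by
    intro a b hab
    have : ((a:ℕ):ℝ) < ((b:ℕ):ℝ) := by exact_mod_cast (hab : (a:ℕ) < (b:ℕ))
    simp only [ypt]; linarith
  constructor
  · rintro H (⟨a, b, hab, rfl⟩ | ⟨a, b, hab, rfl⟩ | ⟨a, ha, rfl⟩)
    · intro hz
      simp only [Set.mem_setOf_eq] at hz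
      exact hne a b hab (by linarith)
    · intro hz
      have := hzpos a; have := hzpos b
      simp only [Set.mem_setOf_eq] at hz
      linarith
    · intro hz
      have := hzpos a
      simp only [Set.mem_setOf_eq] at hz
      linarith
  · have h1 : (Finset.univ.filter fun q : Fin p × Fin p =>
        q.1 < q.2 ∧ (ypt p q.1 - ypt p q.2) * (z q.1 - z q.2) < 0)
        = (Finset.Iio i).image (fun a => (a, i)) := by
      ext q
      obtain ⟨a, b⟩ := q
      simp only [Finset.mem_filter, Finset.mem_univ, true_and, Finset.mem_image,
        Finset.mem_Iio, Prod.mk.injEq]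
      constructor
      · rintro ⟨hlt, hprod⟩
        have hd := hdiff a b hlt
        have hyp := hy a b hlt
        by_cases hq : b = i
        · exact ⟨a, hq ▸ hlt, rfl, hq.symm⟩
        · rw [if_neg hq] at hd
          have : 0 < (ypt p a - ypt p b) * (z a - z b) :=
            mul_pos hyp (by linarith)
          linarith
      · rintro ⟨c, hc, rfl, rfl⟩
        refine ⟨hc, ?_⟩
        have hd := hdiff c i hc
        rw [if_pos rfl] at hd
        exact mul_neg_of_pos_of_neg (hy c i hc) (by linarith)
    have h2 : (Finset.univ.filter fun q : Fin p × Fin p =>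
        q.1 < q.2 ∧ (ypt p q.1 + ypt p q.2) * (z q.1 + z q.2) < 0) = ∅ := by
      rw [Finset.filter_eq_empty_iff]
      rintro q - ⟨hlt, hprod⟩
      have := mul_pos (add_pos (hypos q.1) (hypos q.2)) (add_pos (hzpos q.1) (hzpos q.2))
      linarith
    have h3 : (Finset.univ.filter fun j : Fin p => p - k ≤ (j : ℕ) ∧ ypt p j * z j < 0) = ∅ := by
      rw [Finset.filter_eq_empty_iff]
      rintro j - ⟨hle, hprod⟩
      have := mul_pos (hypos j) (hzpos j)
      linarith
    have hinj : Function.Injective (fun a : Fin p => (a, i)) := by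
      intro a b h
      simpa using congrArg Prod.fst h
    rw [sep, h1, h2, h3, Finset.card_image_of_injective _ hinj, Fin.card_Iio]
    simp
end

section
/- Let p ≥ 2, 0 ≤ k ≤ p and 1 ≤ i ≤ p be integers, and let z ∈ ℝ^p be the point z = (p−1, p−2, …, p−i+1, −p, p−i, …, 1), i.e., z_j = p − j for j < i, z_i = −p, and z_j = p − j + 1 for j > i. Then z lies on none of the hyperplanes of 𝒟_p^k, and sep_p^k(y_p, z) = 2p − i − 1 if i ≤ p − k, while sep_p^k(y_p, z) = 2p − i if i > p − k. -/
open Polynomial Finset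

/-- the point `z` obtained from `y_p` by moving the value `-p` into the
(0-indexed) `i`-th slot lies on none of the hyperplanes of `𝒟_p^k`, and the number of
hyperplanes separating `y_p` and `z` is `2p - i - 2` if `i < p - k` (1-indexed:
`2p - i - 1` for `i ≤ p - k`) and `2p - i - 1` if `i ≥ p - k` (1-indexed: `2p - i` for
`i > p - k`). -/
theorem sep_z_minus (p k : ℕ) (hp : 2 ≤ p) (hk : k ≤ p) (i : Fin p)
    (z : Fin p → ℝ)
    (hzlt : ∀ j : Fin p, (j : ℕ) < (i : ℕ) → z j = (p : ℝ) - (j : ℕ) - 1)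
    (hzi : z i = -(p : ℝ))
    (hzgt : ∀ j : Fin p, (i : ℕ) < (j : ℕ) → z j = (p : ℝ) - (j : ℕ)) :
    (∀ H ∈ hyps p k, z ∉ H) ∧
    ((i : ℕ) < p - k → sep p k (ypt p) z = 2 * p - (i : ℕ) - 2) ∧
    (p - k ≤ (i : ℕ) → sep p k (ypt p) z = 2 * p - (i : ℕ) - 1) := by
  have hip : (i : ℕ) < p := i.isLt
  have hpR : (2:ℝ) ≤ (p:ℝ) := by exact_mod_cast hp
  -- positivity facts for z off i
  have hpos : ∀ j : Fin p, j ≠ i → 0 < z j ∧ z j ≤ (p:ℝ) - 1 := by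
    intro j hj
    rcases lt_trichotomy (j:ℕ) (i:ℕ) with h | h | h
    · rw [hzlt j h]
      have h1 : (j:ℕ) + 1 < p := by omega
      have h1' : ((j:ℕ):ℝ) + 1 < (p:ℝ) := by exact_mod_cast h1
      have h2 : (0:ℝ) ≤ ((j:ℕ):ℝ) := Nat.cast_nonneg _
      constructor <;> linarith
    · exact absurd (Fin.ext h) hj
    · rw [hzgt j h]
      have h1 : ((j:ℕ):ℝ) < (p:ℝ) := by exact_mod_cast j.isLt
      have h2 : (1:ℝ) ≤ ((j:ℕ):ℝ) := by exact_mod_cast Nat.one_le_iff_ne_zero.mpr (by omega)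
      exact ⟨by linarith, by linarith⟩
  have hdec : ∀ a b : Fin p, a < b → a ≠ i → b ≠ i → z b < z a := by
    intro a b hab ha hb
    have habn : (a:ℕ) < (b:ℕ) := hab
    rcases lt_trichotomy (a:ℕ) (i:ℕ) with h1 | h1 | h1
    · rcases lt_trichotomy (b:ℕ) (i:ℕ) with h2 | h2 | h2
      · rw [hzlt a h1, hzlt b h2]
        have : ((a:ℕ):ℝ) < ((b:ℕ):ℝ) := by exact_mod_cast habn
        linarith
      · exact absurd (Fin.ext h2) hb
      · rw [hzlt a h1, hzgt b h2]
        have hc : (a:ℕ) + 2 ≤ (b:ℕ) := by omega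
        have hc' : ((a:ℕ):ℝ) + 2 ≤ ((b:ℕ):ℝ) := by exact_mod_cast hc
        linarith
    · exact absurd (Fin.ext h1) ha
    · rw [hzgt a h1, hzgt b (by omega)]
      have : ((a:ℕ):ℝ) < ((b:ℕ):ℝ) := by exact_mod_cast habn
      linarith
  have hlt : ∀ a b : Fin p, a < b → (z a < z b ↔ a = i) := by
    intro a b hab
    constructor
    · intro h
      by_contra ha
      by_cases hb : b = i
      · subst hb; rw [hzi] at h; have := (hpos a ha).1; linarith
      · exact absurd h (not_lt.mpr (hdec a b hab ha hb).le)
    · intro ha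
      rw [ha, hzi]
      have hb : b ≠ i := by intro hbi; rw [ha, hbi] at hab; exact lt_irrefl _ hab
      have := (hpos b hb).1; linarith
  have hsumlt : ∀ a b : Fin p, a < b → (z a + z b < 0 ↔ a = i ∨ b = i) := by
    intro a b hab
    constructor
    · intro h
      by_contra hc
      push_neg at hc
      have := (hpos a hc.1).1
      have := (hpos b hc.2).1
      linarith
    · rintro (ha | hb)
      · have hb : b ≠ i := by intro hbi; rw [ha, hbi] at hab; exact lt_irrefl _ hab
        have := (hpos b hb).2
        rw [ha, hzi]; linarith
      · have ha : a ≠ i := by intro hai; rw [hai, hb] at hab; exact lt_irrefl _ hab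
        have := (hpos a ha).2
        rw [hb, hzi]; linarith
  have hy : ∀ j : Fin p, 0 < ypt p j := by
    intro j
    have : ((j:ℕ):ℝ) < (p:ℝ) := by exact_mod_cast j.isLt
    unfold ypt; linarith
  have hyd : ∀ a b : Fin p, a < b → 0 < ypt p a - ypt p b := by
    intro a b hab
    have : ((a:ℕ):ℝ) < ((b:ℕ):ℝ) := by exact_mod_cast (hab : (a:ℕ) < (b:ℕ))
    unfold ypt; linarith
  -- Part 1
  have part1 : ∀ H ∈ hyps p k, z ∉ H := by
    rintro H (⟨a, b, hab, rfl⟩ | ⟨a, b, hab, rfl⟩ | ⟨a, _, rfl⟩) hz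
    · have hz' : z a = z b := sub_eq_zero.mp hz
      by_cases ha : a = i
      · have hb : b ≠ i := by intro hbi; rw [ha, hbi] at hab; exact lt_irrefl _ hab
        have := (hpos b hb).1; rw [ha, hzi] at hz'; linarith
      · by_cases hb : b = i
        · subst hb
          have := (hpos a ha).1; rw [hzi] at hz'; linarith
        · exact absurd hz' (hdec a b hab ha hb).ne'
    · have hz' : z a + z b = 0 := hz
      by_cases hc : a = i ∨ b = i
      · have := (hsumlt a b hab).mpr hc; linarith
      · push_neg at hc
        have := (hpos a hc.1).1
        have := (hpos b hc.2).1
        linarith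
    · have hz' : z a = 0 := hz
      by_cases ha : a = i
      · subst ha; rw [hzi] at hz'; linarith
      · have := (hpos a ha).1; linarith
  -- the three filter sets
  have hS1 : (Finset.univ.filter fun q : Fin p × Fin p =>
      q.1 < q.2 ∧ (ypt p q.1 - ypt p q.2) * (z q.1 - z q.2) < 0)
      = (Finset.Ioi i).image (fun b => (i, b)) := by
    ext ⟨a, b⟩
    simp only [Finset.mem_filter, Finset.mem_univ, true_and, Finset.mem_image,
      Finset.mem_Ioi, Prod.mk.injEq]
    constructor
    · rintro ⟨hab, hprod⟩
      have hd := hyd a b hab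
      rcases mul_neg_iff.mp hprod with ⟨h1, h2⟩ | ⟨h1, h2⟩
      · have ha : a = i := (hlt a b hab).mp (by linarith)
        subst ha
        exact ⟨b, hab, rfl, rfl⟩
      · linarith
    · rintro ⟨b', hib, rfl, rfl⟩
      refine ⟨hib, ?_⟩
      have h2 : z i < z b' := (hlt i b' hib).mpr rfl
      exact mul_neg_of_pos_of_neg (hyd i b' hib) (by linarith)
  have hS2 : (Finset.univ.filter fun q : Fin p × Fin p =>
      q.1 < q.2 ∧ (ypt p q.1 + ypt p q.2) * (z q.1 + z q.2) < 0)
      = ((Finset.Ioi i).image fun b => (i, b)) ∪ ((Finset.Iio i).image fun a => (a, i)) := by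
    ext ⟨a, b⟩
    simp only [Finset.mem_filter, Finset.mem_univ, true_and, Finset.mem_union,
      Finset.mem_image, Finset.mem_Ioi, Finset.mem_Iio, Prod.mk.injEq]
    constructor
    · rintro ⟨hab, hprod⟩
      have hy2 : 0 < ypt p a + ypt p b := by linarith [hy a, hy b]
      have hz2 : z a + z b < 0 := by
        rcases mul_neg_iff.mp hprod with ⟨h1, h2⟩ | ⟨h1, h2⟩
        · exact h2
        · linarith
      rcases (hsumlt a b hab).mp hz2 with rfl | rfl
      · exact Or.inl ⟨b, hab, rfl, rfl⟩
      · exact Or.inr ⟨a, hab, rfl, rfl⟩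
    · rintro (⟨b', hib, rfl, rfl⟩ | ⟨a', hai, rfl, rfl⟩)
      · exact ⟨hib, mul_neg_of_pos_of_neg (by linarith [hy i, hy b'])
          ((hsumlt i b' hib).mpr (Or.inl rfl))⟩
      · exact ⟨hai, mul_neg_of_pos_of_neg (by linarith [hy a', hy i])
          ((hsumlt a' i hai).mpr (Or.inr rfl))⟩
  have hS3 : (Finset.univ.filter fun j : Fin p => p - k ≤ (j:ℕ) ∧ ypt p j * z j < 0)
      = if p - k ≤ (i:ℕ) then {i} else (∅ : Finset (Fin p)) := by
    ext j
    have hji : ypt p j * z j < 0 ↔ j = i := by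
      constructor
      · intro h
        by_contra hj
        have h1 := (hpos j hj).1
        have h2 := hy j
        nlinarith
      · intro hj
        rw [hj, hzi]
        exact mul_neg_of_pos_of_neg (hy i) (by linarith)
    simp only [Finset.mem_filter, Finset.mem_univ, true_and, hji]
    split_ifs with h
    · simp only [Finset.mem_singleton]
      constructor
      · rintro ⟨_, rfl⟩; rfl
      · rintro rfl; exact ⟨h, rfl⟩
    · simp only [Finset.notMem_empty, iff_false]
      rintro ⟨h1, rfl⟩; exact h h1
  have hinj1 : Function.Injective (fun b : Fin p => (i, b)) := by
    intro x y h; exact (Prod.ext_iff.mp h).2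
  have hinj2 : Function.Injective (fun a : Fin p => (a, i)) := by
    intro x y h; exact (Prod.ext_iff.mp h).1
  have hdisj : Disjoint ((Finset.Ioi i).image fun b => (i, b))
      ((Finset.Iio i).image fun a => (a, i)) := by
    rw [Finset.disjoint_left]
    rintro ⟨a, b⟩ h1 h2
    simp only [Finset.mem_image, Finset.mem_Ioi, Finset.mem_Iio, Prod.mk.injEq] at h1 h2
    obtain ⟨x, hx, hxa, -⟩ := h1
    obtain ⟨y, hy2, hya, -⟩ := h2
    rw [hya, ← hxa] at hy2
    exact lt_irrefl _ hy2
  have hsep : sep p k (ypt p) z =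
      (p - 1 - (i:ℕ)) + ((p - 1 - (i:ℕ)) + (i:ℕ)) + (if p - k ≤ (i:ℕ) then 1 else 0) := by
    unfold sep
    rw [hS1, hS2, hS3, Finset.card_union_of_disjoint hdisj,
      Finset.card_image_of_injective _ hinj1, Finset.card_image_of_injective _ hinj2, Fin.card_Ioi, Fin.card_Iio]
    split_ifs <;> simp
  refine ⟨part1, ?_, ?_⟩
  · intro h; rw [hsep]; rw [if_neg (by omega)]; omega
  · intro h; rw [hsep]; rw [if_pos h]; omega
end

section
/- Let p ≥ 2, 0 ≤ k ≤ p and 1 ≤ i ≤ p be integers, let x ∈ M_p^k with x_i = −p, and let x̂ ∈ ℝ^{p−1} be obtained from x by deleting the i-th coordinate. If i ≤ p − k, then x̂ ∈ M_{p−1}^{k} and sep_p^k(y_p, x) = (2p − i − 1) + sep_{p−1}^{k}(y_{p−1}, x̂); if i > p − k, then x̂ ∈ M_{p−1}^{k−1} and sep_p^k(y_p, x) = (2p − i) + sep_{p−1}^{k−1}(y_{p−1}, x̂). -/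
open Polynomial Finset

private lemma pair_count {q : ℕ} (i : Fin (q+1)) (P : Fin (q+1) × Fin (q+1) → Prop) [DecidablePred P] :
    (univ.filter P).card
      = (univ.filter fun s => P s ∧ (s.1 = i ∨ s.2 = i)).card
        + (univ.filter fun s : Fin q × Fin q => P (i.succAbove s.1, i.succAbove s.2)).card := by
  have h := Finset.card_filter_add_card_filter_not
      (p := fun s : Fin (q+1) × Fin (q+1) => s.1 = i ∨ s.2 = i)
      (s := (univ : Finset (Fin (q+1) × Fin (q+1))).filter P)
  rw [Finset.filter_filter, Finset.filter_filter] at h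
  rw [← h]
  congr 1
  symm
  apply Finset.card_bij (fun (s : Fin q × Fin q) _ => (i.succAbove s.1, i.succAbove s.2))
  · intro s hs
    simp only [mem_filter, mem_univ, true_and] at hs ⊢
    exact ⟨hs, by push_neg; exact ⟨Fin.succAbove_ne i s.1, Fin.succAbove_ne i s.2⟩⟩
  · intro a _ b _ h
    have h1 : i.succAbove a.1 = i.succAbove b.1 := congrArg Prod.fst h
    have h2 : i.succAbove a.2 = i.succAbove b.2 := congrArg Prod.snd h
    exact Prod.ext (Fin.succAbove_right_injective h1) (Fin.succAbove_right_injective h2)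
  · intro s hs
    simp only [mem_filter, mem_univ, true_and] at hs
    obtain ⟨hP, hni⟩ := hs
    push_neg at hni
    obtain ⟨a, ha⟩ := Fin.exists_succAbove_eq hni.1
    obtain ⟨b, hb⟩ := Fin.exists_succAbove_eq hni.2
    refine ⟨(a, b), ?_, by rw [ha, hb]⟩
    simp only [mem_filter, mem_univ, true_and]
    rw [ha, hb]
    exact hP

private lemma single_count {q : ℕ} (i : Fin (q+1)) (P : Fin (q+1) → Prop) [DecidablePred P] :
    (univ.filter P).card
      = (if P i then 1 else 0) + (univ.filter fun j : Fin q => P (i.succAbove j)).card := by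
  have h := Finset.card_filter_add_card_filter_not
      (p := fun j : Fin (q+1) => j = i)
      (s := (univ : Finset (Fin (q+1))).filter P)
  rw [Finset.filter_filter, Finset.filter_filter] at h
  rw [← h]
  congr 1
  · split_ifs with hP
    · rw [show (univ.filter fun j : Fin (q+1) => P j ∧ j = i) = {i} from ?_, Finset.card_singleton]
      ext j
      simp only [mem_filter, mem_univ, true_and, mem_singleton]
      exact ⟨fun h => h.2, fun h => ⟨h ▸ hP, h⟩⟩
    · rw [Finset.card_eq_zero.mpr ?_]
      ext j
      simp only [mem_filter, mem_univ, true_and, notMem_empty, iff_false, not_and]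
      intro hPj hji
      exact hP (hji ▸ hPj)
  · symm
    apply Finset.card_bij (fun (j : Fin q) _ => i.succAbove j)
    · intro j hj
      simp only [mem_filter, mem_univ, true_and] at hj ⊢
      exact ⟨hj, Fin.succAbove_ne i j⟩
    · intro a _ b _ h
      exact Fin.succAbove_right_injective h
    · intro j hj
      simp only [mem_filter, mem_univ, true_and] at hj
      obtain ⟨a, ha⟩ := Fin.exists_succAbove_eq hj.2
      exact ⟨a, by simp only [mem_filter, mem_univ, true_and]; rw [ha]; exact hj.1, ha⟩

private lemma sep_eq_cards (p k : ℕ) (x : Fin p → ℤ) :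
    sep p k (ypt p) (toR x) =
      (univ.filter fun s : Fin p × Fin p => s.1 < s.2 ∧ x s.1 < x s.2).card +
      (univ.filter fun s : Fin p × Fin p => s.1 < s.2 ∧ x s.1 + x s.2 < 0).card +
      (univ.filter fun j : Fin p => p - k ≤ (j : ℕ) ∧ x j < 0).card := by
  unfold sep
  congr 1
  · congr 1
    · apply congrArg Finset.card
      apply Finset.filter_congr
      intro s _
      refine and_congr_right fun h1 => ?_
      have hpos : (0:ℝ) < ypt p s.1 - ypt p s.2 := by
        have : ((s.1 : ℕ) : ℝ) < ((s.2 : ℕ) : ℝ) := by exact_mod_cast (Fin.lt_def.mp h1)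
        simp only [ypt]
        linarith
      rw [show toR x s.1 - toR x s.2 = ((x s.1 - x s.2 : ℤ) : ℝ) by simp [toR]]
      constructor
      · intro h
        by_contra h3
        push_neg at h3
        have h4 : (0:ℝ) ≤ ((x s.1 - x s.2 : ℤ) : ℝ) := by exact_mod_cast sub_nonneg.mpr h3
        nlinarith
      · intro h
        have h4 : ((x s.1 - x s.2 : ℤ) : ℝ) < 0 := by exact_mod_cast sub_neg.mpr h
        exact mul_neg_of_pos_of_neg hpos h4
    · apply congrArg Finset.card
      apply Finset.filter_congr
      intro s _
      refine and_congr_right fun h1 => ?_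
      have hpos : (0:ℝ) < ypt p s.1 + ypt p s.2 := by
        have h2 : ((s.1 : ℕ) : ℝ) < (p : ℝ) := by exact_mod_cast s.1.isLt
        have h3 : ((s.2 : ℕ) : ℝ) < (p : ℝ) := by exact_mod_cast s.2.isLt
        simp only [ypt]
        linarith
      rw [show toR x s.1 + toR x s.2 = ((x s.1 + x s.2 : ℤ) : ℝ) by simp [toR]]
      constructor
      · intro h
        by_contra h3
        push_neg at h3
        have h4 : (0:ℝ) ≤ ((x s.1 + x s.2 : ℤ) : ℝ) := by exact_mod_cast h3
        nlinarith
      · intro h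
        have h4 : ((x s.1 + x s.2 : ℤ) : ℝ) < 0 := by exact_mod_cast h
        exact mul_neg_of_pos_of_neg hpos h4
  · apply congrArg Finset.card
    apply Finset.filter_congr
    intro j _
    refine and_congr_right fun h1 => ?_
    have hpos : (0:ℝ) < ypt p j := by
      have h2 : ((j : ℕ) : ℝ) < (p : ℝ) := by exact_mod_cast j.isLt
      simp only [ypt]
      linarith
    rw [show toR x j = ((x j : ℤ) : ℝ) by simp [toR]]
    constructor
    · intro h
      by_contra h3
      push_neg at h3
      have h4 : (0:ℝ) ≤ ((x j : ℤ) : ℝ) := by exact_mod_cast h3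
      nlinarith
    · intro h
      have h4 : ((x j : ℤ) : ℝ) < 0 := by exact_mod_cast h
      exact mul_neg_of_pos_of_neg hpos h4

/-- deleting the `i`-th coordinate of a point `x ∈ M_p^k` with `x_i = -p`
yields a point of `M_{p-1}^{k}` (resp. `M_{p-1}^{k-1}`), and the separation count from
`y_p` decomposes accordingly. (Here `i` is 0-indexed, so the 1-indexed exponents
`2p - i - 1` resp. `2p - i` become `2p - i - 2` resp. `2p - i - 1`.) -/
theorem delete_coord_neg_p (p k : ℕ) (hp : 2 ≤ p) (hk : k ≤ p) (i : Fin p)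
    (x : Fin p → ℤ) (hx : x ∈ Mfin p k) (hxi : x i = -(p : ℤ)) :
    ((i : ℕ) < p - k →
      deleteCoord i x ∈ Mfin (p - 1) k ∧
      sep p k (ypt p) (toR x)
        = (2 * p - (i : ℕ) - 2) + sep (p - 1) k (ypt (p - 1)) (toR (deleteCoord i x))) ∧
    (p - k ≤ (i : ℕ) →
      deleteCoord i x ∈ Mfin (p - 1) (k - 1) ∧
      sep p k (ypt p) (toR x)
        = (2 * p - (i : ℕ) - 1)
            + sep (p - 1) (k - 1) (ypt (p - 1)) (toR (deleteCoord i x))) := by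
  obtain ⟨q, rfl⟩ : ∃ q, p = q + 1 := ⟨p - 1, by omega⟩
  simp only [Mfin, Finset.mem_filter, Fintype.mem_piFinset, Finset.mem_Icc] at hx
  obtain ⟨hbd, hne0, habs, hne1⟩ := hx
  have hiq : (i : ℕ) ≤ q := by have := i.isLt; omega
  have hxi' : x i = -((q:ℤ)+1) := by rw [hxi]; push_cast; ring
  have hsmall : ∀ j : Fin (q+1), j ≠ i → -(q:ℤ) ≤ x j ∧ x j ≤ (q:ℤ) := by
    intro j hj
    have h1 := hbd j
    have h2 := habs j i hj
    rw [hxi'] at h2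
    have h3 : |x j| ≠ (q:ℤ)+1 := by
      intro h
      apply h2
      rw [h, abs_neg, abs_of_nonneg (by positivity)]
    push_cast at h1
    rcases abs_cases (x j) with ⟨h4, h5⟩ | ⟨h4, h5⟩ <;> omega
  have hdel : ∀ j : Fin q, deleteCoord i x j = x (i.succAbove j) := by
    intro j
    simp only [deleteCoord]
    rcases Nat.lt_or_ge (j:ℕ) (i:ℕ) with h | h
    · rw [if_pos h, Fin.succAbove_of_castSucc_lt _ _ (by simpa [Fin.lt_def] using h)]
      congr 1
    · rw [if_neg (by omega), Fin.succAbove_of_le_castSucc _ _ (by simpa [Fin.le_def] using h)]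
      congr 1
  have hval : ∀ j : Fin q, ((i.succAbove j : Fin (q+1)) : ℕ)
      = if (j:ℕ) < (i:ℕ) then (j:ℕ) else (j:ℕ)+1 := by
    intro j
    rcases Nat.lt_or_ge (j:ℕ) (i:ℕ) with h | h
    · rw [if_pos h, Fin.succAbove_of_castSucc_lt _ _ (by simpa [Fin.lt_def] using h)]
      simp
    · rw [if_neg (by omega), Fin.succAbove_of_le_castSucc _ _ (by simpa [Fin.le_def] using h)]
      simp
  have hbound : ∀ j : Fin q, -(q:ℤ) ≤ deleteCoord i x j ∧ deleteCoord i x j ≤ (q:ℤ) := by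
    intro j
    rw [hdel j]
    exact hsmall _ (Fin.succAbove_ne i j)
  have hne0' : ∀ j : Fin q, deleteCoord i x j ≠ 0 := by
    intro j
    rw [hdel j]
    exact hne0 _
  have habs' : ∀ a b : Fin q, a ≠ b → |deleteCoord i x a| ≠ |deleteCoord i x b| := by
    intro a b hab
    rw [hdel a, hdel b]
    exact habs _ _ fun h => hab (Fin.succAbove_right_injective h)
  have hA : (univ.filter fun s : Fin (q+1) × Fin (q+1) => s.1 < s.2 ∧ x s.1 < x s.2).card
      = (q - (i:ℕ)) + (univ.filter fun s : Fin q × Fin q =>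
          s.1 < s.2 ∧ deleteCoord i x s.1 < deleteCoord i x s.2).card := by
    rw [pair_count i]
    congr 1
    · rw [show (univ.filter fun s : Fin (q+1) × Fin (q+1) =>
            (s.1 < s.2 ∧ x s.1 < x s.2) ∧ (s.1 = i ∨ s.2 = i))
          = (Finset.Ioi i).image (fun b => (i, b)) from ?_]
      · rw [Finset.card_image_of_injective _ (fun a b h => by simpa using congrArg Prod.snd h),
            Fin.card_Ioi]
        omega
      · ext s
        simp only [mem_filter, mem_univ, true_and, mem_image, mem_Ioi]
        constructor
        · rintro ⟨⟨h1, h2⟩, h3 | h3⟩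
          · exact ⟨s.2, h3 ▸ h1, by rw [← h3]⟩
          · exfalso
            have hs1 : s.1 ≠ i := by rw [← h3]; exact ne_of_lt h1
            have h4 := hsmall s.1 hs1
            rw [h3, hxi'] at h2
            omega
        · rintro ⟨b, hb, rfl⟩
          refine ⟨⟨hb, ?_⟩, Or.inl rfl⟩
          have h4 := hsmall b (ne_of_gt hb)
          dsimp only
          rw [hxi']
          omega
    · apply congrArg Finset.card
      apply Finset.filter_congr
      intro s _
      simp only [hdel, Fin.succAbove_lt_succAbove_iff]
  have hB : (univ.filter fun s : Fin (q+1) × Fin (q+1) => s.1 < s.2 ∧ x s.1 + x s.2 < 0).card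
      = q + (univ.filter fun s : Fin q × Fin q =>
          s.1 < s.2 ∧ deleteCoord i x s.1 + deleteCoord i x s.2 < 0).card := by
    rw [pair_count i]
    congr 1
    · rw [show (univ.filter fun s : Fin (q+1) × Fin (q+1) =>
            (s.1 < s.2 ∧ x s.1 + x s.2 < 0) ∧ (s.1 = i ∨ s.2 = i))
          = ((Finset.Ioi i).image fun b => (i, b)) ∪ ((Finset.Iio i).image fun a => (a, i))
          from ?_]
      · rw [Finset.card_union_of_disjoint ?_,
            Finset.card_image_of_injective _ (fun a b h => by simpa using congrArg Prod.snd h),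
            Finset.card_image_of_injective _ (fun a b h => by simpa using congrArg Prod.fst h),
            Fin.card_Ioi, Fin.card_Iio]
        · omega
        · rw [Finset.disjoint_left]
          rintro s hs1 hs2
          simp only [mem_image, mem_Ioi, mem_Iio] at hs1 hs2
          obtain ⟨b, hb, rfl⟩ := hs1
          obtain ⟨a, ha, h⟩ := hs2
          have h5 : a = i := by simpa using congrArg Prod.fst h
          exact absurd (h5 ▸ ha) (lt_irrefl i)
      · ext s
        simp only [mem_filter, mem_univ, true_and, mem_union, mem_image, mem_Ioi, mem_Iio]
        constructor
        · rintro ⟨⟨h1, h2⟩, h3 | h3⟩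
          · exact Or.inl ⟨s.2, h3 ▸ h1, by rw [← h3]⟩
          · exact Or.inr ⟨s.1, h3 ▸ h1, by rw [← h3]⟩
        · rintro (⟨b, hb, rfl⟩ | ⟨a, ha, rfl⟩)
          · refine ⟨⟨hb, ?_⟩, Or.inl rfl⟩
            have h4 := hsmall b (ne_of_gt hb)
            dsimp only
            rw [hxi']
            omega
          · refine ⟨⟨ha, ?_⟩, Or.inr rfl⟩
            have h4 := hsmall a (ne_of_lt ha)
            dsimp only
            rw [hxi']
            omega
    · apply congrArg Finset.card
      apply Finset.filter_congr
      intro s _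
      simp only [hdel, Fin.succAbove_lt_succAbove_iff]
  constructor
  · intro hik
    show deleteCoord i x ∈ Mfin q k ∧
      sep (q+1) k (ypt (q+1)) (toR x)
        = (2 * (q+1) - (i : ℕ) - 2) + sep q k (ypt q) (toR (deleteCoord i x))
    constructor
    · simp only [Mfin, Finset.mem_filter, Fintype.mem_piFinset, Finset.mem_Icc]
      refine ⟨fun j => hbound j, hne0', habs', fun j hj => ?_⟩
      rw [hdel j]
      apply hne1
      have hv := hval j
      have hj' := j.isLt
      split_ifs at hv <;> omega
    · have hC : (univ.filter fun j : Fin (q+1) => (q+1) - k ≤ (j:ℕ) ∧ x j < 0).card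
          = (univ.filter fun j : Fin q => q - k ≤ (j:ℕ) ∧ deleteCoord i x j < 0).card := by
        rw [single_count i]
        rw [if_neg (fun h => absurd h.1 (by omega)), Nat.zero_add]
        apply congrArg Finset.card
        apply Finset.filter_congr
        intro j _
        simp only [hdel]
        have hv := hval j
        have hj' := j.isLt
        constructor
        · rintro ⟨h1, h2⟩
          refine ⟨?_, h2⟩
          split_ifs at hv <;> omega
        · rintro ⟨h1, h2⟩
          refine ⟨?_, h2⟩
          split_ifs at hv <;> omega
      rw [sep_eq_cards (q+1) k x, sep_eq_cards q k (deleteCoord i x), hA, hB, hC]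
      omega
  · intro hik
    have hk1 : 1 ≤ k := by omega
    show deleteCoord i x ∈ Mfin q (k-1) ∧
      sep (q+1) k (ypt (q+1)) (toR x)
        = (2 * (q+1) - (i : ℕ) - 1) + sep q (k-1) (ypt q) (toR (deleteCoord i x))
    constructor
    · simp only [Mfin, Finset.mem_filter, Fintype.mem_piFinset, Finset.mem_Icc]
      refine ⟨fun j => hbound j, hne0', habs', fun j hj => ?_⟩
      rw [hdel j]
      apply hne1
      have hv := hval j
      have hj' := j.isLt
      split_ifs at hv <;> omega
    · have hC : (univ.filter fun j : Fin (q+1) => (q+1) - k ≤ (j:ℕ) ∧ x j < 0).card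
          = 1 + (univ.filter fun j : Fin q => q - (k-1) ≤ (j:ℕ) ∧ deleteCoord i x j < 0).card := by
        rw [single_count i]
        rw [if_pos ⟨hik, by rw [hxi']; omega⟩]
        congr 1
        apply congrArg Finset.card
        apply Finset.filter_congr
        intro j _
        simp only [hdel]
        have hv := hval j
        have hj' := j.isLt
        constructor
        · rintro ⟨h1, h2⟩
          refine ⟨?_, h2⟩
          split_ifs at hv <;> omega
        · rintro ⟨h1, h2⟩
          refine ⟨?_, h2⟩
          split_ifs at hv <;> omega
      rw [sep_eq_cards (q+1) k x, sep_eq_cards q (k-1) (deleteCoord i x), hA, hB, hC]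
      omega
end
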